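/- Let ξ : ℝ^d → ℝ be a smooth even compactly supported kernel and F̄ : 𝕋^d × ℝ → ℝ smooth with c ≤ ∂F̄/∂z ≤ 1/c for some c > 0. Define F(x,m) = ((F̄(·,(m⋆ξ)(·)))⋆ξ)(x). Then F satisfies the weak coercivity condition: there exists c̄ > 0 (one may take c̄ = c³‖ξ‖_{L²}^{−2}) such that for all probability measures m₁, m₂ on 𝕋^d, ∫ (F(x,m₁) − F(x,m₂)) d(m₁−m₂) ≥ c̄ ∫ (F(x,m₁) − F(x,m₂))² dx. -/

import Mathlib

open MeasureTheory

noncomputable section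

/-- The flat torus `𝕋^d = ℝ^d/ℤ^d`. -/
abbrev Torus (d : ℕ) := Fin d → AddCircle (1 : ℝ)

/-- Convolution `m ⋆ ξ` of a measure `m` on the torus with a kernel `ξ`. -/
def measConv {d : ℕ} (m : Measure (Torus d)) (ξ : Torus d → ℝ) (x : Torus d) : ℝ :=
  ∫ y, ξ (x - y) ∂m

/-- The coupling `F(x, m) = (F̄(·, (m⋆ξ)(·)) ⋆ ξ)(x)`. -/
def coupling {d : ℕ} (ξ : Torus d → ℝ) (Fb : Torus d → ℝ → ℝ)
    (m : Measure (Torus d)) (x : Torus d) : ℝ :=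
  ∫ y, Fb y (measConv m ξ y) * ξ (x - y)

/-!
Write `uᵢ = mᵢ ⋆ ξ` and `φ = F̄(·, u₁) - F̄(·, u₂)`, so that `F(·, m₁) - F(·, m₂) = φ ⋆ ξ`.
As `ξ` is even, Fubini turns the pairing `∫ (φ ⋆ ξ) d(m₁ - m₂)` into `∫ φ (u₁ - u₂)`, which is at
least `c ∫ (u₁ - u₂)²` since `∂F̄/∂z ≥ c`. On the other side, Cauchy–Schwarz and translation
invariance give `∫ (φ ⋆ ξ)² ≤ ‖ξ‖²_{L²} ∫ φ²`, and `|∂F̄/∂z| ≤ 1/c` gives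
`∫ φ² ≤ c⁻² ∫ (u₁ - u₂)²`.
-/

instance : IsProbabilityMeasure (volume : Measure (AddCircle (1 : ℝ))) :=
  ⟨by simp [AddCircle.measure_univ]⟩

instance (d : ℕ) : (volume : Measure (Torus d)).IsNegInvariant :=
  ⟨(volume_preserving_pi fun _ => Measure.measurePreserving_neg volume).map_eq⟩

theorem Continuous.integrable_of_compactSpace {X E : Type*} [TopologicalSpace X] [CompactSpace X]
    [MeasurableSpace X] [OpensMeasurableSpace X] [NormedAddCommGroup E] {f : X → E}
    (hf : Continuous f) (μ : Measure X) [IsFiniteMeasure μ] : Integrable f μ :=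
  hf.integrable_of_hasCompactSupport (.of_compactSpace f)

theorem continuous_integral_of_continuous_uncurry {X Y : Type*} [TopologicalSpace X]
    [FirstCountableTopology X] [LocallyCompactSpace X] [TopologicalSpace Y] [CompactSpace Y]
    [MeasurableSpace Y] [OpensMeasurableSpace Y] {μ : Measure Y} [IsFiniteMeasure μ]
    {f : X → Y → ℝ} (hf : Continuous f.uncurry) : Continuous fun x => ∫ y, f x y ∂μ := by
  simpa using continuous_parametric_integral_of_continuous (μ := μ) hf isCompact_univ

theorem sq_integral_mul_le {α : Type*} [MeasurableSpace α] {μ : Measure α} {f g : α → ℝ}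
    (hf : Integrable (fun x => f x ^ 2) μ) (hg : Integrable (fun x => g x ^ 2) μ)
    (hfg : Integrable (fun x => f x * g x) μ) :
    (∫ x, f x * g x ∂μ) ^ 2 ≤ (∫ x, f x ^ 2 ∂μ) * ∫ x, g x ^ 2 ∂μ := by
  have hquadratic : ∀ t : ℝ, 0 ≤ (∫ x, f x ^ 2 ∂μ) * (t * t) + (2 * ∫ x, f x * g x ∂μ) * t
      + ∫ x, g x ^ 2 ∂μ := fun t => by
    have hexpand : ∫ x, (t * f x + g x) ^ 2 ∂μ
        = (∫ x, f x ^ 2 ∂μ) * (t * t) + (2 * ∫ x, f x * g x ∂μ) * t + ∫ x, g x ^ 2 ∂μ := by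
      have hsq : (fun x => (t * f x + g x) ^ 2)
          = fun x => t ^ 2 * f x ^ 2 + 2 * t * (f x * g x) + g x ^ 2 := by
        funext x; ring
      have hfirst : Integrable (fun x => t ^ 2 * f x ^ 2 + 2 * t * (f x * g x)) μ :=
        (hf.const_mul _).add (hfg.const_mul _)
      rw [hsq, integral_add hfirst hg, integral_add (hf.const_mul _) (hfg.const_mul _),
        integral_const_mul, integral_const_mul]
      ring
    exact hexpand ▸ integral_nonneg fun x => sq_nonneg _
  have hdiscrim := discrim_le_zero hquadratic
  rw [discrim] at hdiscrim
  linarith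

theorem mul_sq_sub_le_sub_mul_sub_of_le_deriv {f f' : ℝ → ℝ} {a : ℝ}
    (hf : ∀ z, HasDerivAt f (f' z) z) (ha : ∀ z, a ≤ f' z) (x y : ℝ) :
    a * (x - y) ^ 2 ≤ (f x - f y) * (x - y) := by
  have hmono : Monotone fun z => f z - a * z :=
    monotone_of_hasDerivAt_nonneg (fun z => (hf z).sub ((hasDerivAt_id z).const_mul a))
      fun z => sub_nonneg.2 (by simpa using ha z)
  rcases le_total x y with h | h
  · nlinarith [hmono h]
  · nlinarith [hmono h]

theorem sq_sub_le_of_abs_deriv_le {f f' : ℝ → ℝ} {C : ℝ}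
    (hf : ∀ z, HasDerivAt f (f' z) z) (hC : ∀ z, |f' z| ≤ C) (x y : ℝ) :
    (f x - f y) ^ 2 ≤ C ^ 2 * (x - y) ^ 2 := by
  have hlip : |f x - f y| ≤ C * |x - y| :=
    convex_univ.norm_image_sub_le_of_norm_hasDerivWithin_le (fun z _ => (hf z).hasDerivWithinAt)
      (fun z _ => hC z) (Set.mem_univ y) (Set.mem_univ x)
  rw [← sq_abs (f x - f y), ← sq_abs (x - y), ← mul_pow]
  exact pow_le_pow_left₀ (abs_nonneg _) hlip 2

section Torus

variable {d : ℕ}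

theorem continuous_measConv (m : Measure (Torus d)) [IsFiniteMeasure m] {ξ : Torus d → ℝ}
    (hξ : Continuous ξ) : Continuous (measConv m ξ) :=
  continuous_integral_of_continuous_uncurry (hξ.comp (continuous_fst.sub continuous_snd))

theorem coupling_sub_coupling {ξ : Torus d → ℝ} (hξ : Continuous ξ) {Fb : Torus d → ℝ → ℝ}
    (hFb : Continuous fun p : Torus d × ℝ => Fb p.1 p.2)
    (m₁ m₂ : Measure (Torus d)) [IsFiniteMeasure m₁] [IsFiniteMeasure m₂] (x : Torus d) :
    coupling ξ Fb m₁ x - coupling ξ Fb m₂ x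
      = ∫ y, (Fb y (measConv m₁ ξ y) - Fb y (measConv m₂ ξ y)) * ξ (x - y) := by
  have hint : ∀ (m : Measure (Torus d)) [IsFiniteMeasure m],
      Integrable fun y => Fb y (measConv m ξ y) * ξ (x - y) := fun m _ =>
    ((hFb.comp (continuous_id.prodMk (continuous_measConv m hξ))).mul
      (hξ.comp (continuous_const.sub continuous_id))).integrable_of_compactSpace _
  simp_rw [coupling, ← integral_sub (hint m₁) (hint m₂), sub_mul]

theorem integral_integral_mul_sub_eq {ξ φ : Torus d → ℝ} (hξ : Continuous ξ)
    (hξeven : ∀ x, ξ (-x) = ξ x) (hφ : Continuous φ) (m : Measure (Torus d)) [IsFiniteMeasure m] :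
    ∫ x, (∫ y, φ y * ξ (x - y)) ∂m = ∫ y, φ y * measConv m ξ y := by
  have hint : Integrable (Function.uncurry fun x y => φ y * ξ (x - y)) (m.prod volume) :=
    ((hφ.comp continuous_snd).mul
      (hξ.comp (continuous_fst.sub continuous_snd))).integrable_of_compactSpace _
  rw [integral_integral_swap hint]
  refine integral_congr_ae (ae_of_all _ fun y => ?_)
  simp only [integral_const_mul, measConv, ← hξeven (y - _), neg_sub]

theorem integral_sq_integral_mul_sub_le {ξ φ : Torus d → ℝ} (hξ : Continuous ξ)
    (hφ : Continuous φ) :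
    ∫ x, (∫ y, φ y * ξ (x - y)) ^ 2 ≤ (∫ x, ξ x ^ 2) * ∫ y, φ y ^ 2 := by
  have hξx : ∀ x, Continuous fun y => ξ (x - y) := fun x =>
    hξ.comp (continuous_const.sub continuous_id)
  have hpointwise : ∀ x, (∫ y, φ y * ξ (x - y)) ^ 2 ≤ (∫ y, φ y ^ 2) * ∫ x, ξ x ^ 2 := fun x =>
    calc (∫ y, φ y * ξ (x - y)) ^ 2 ≤ (∫ y, φ y ^ 2) * ∫ y, ξ (x - y) ^ 2 :=
          sq_integral_mul_le ((hφ.pow 2).integrable_of_compactSpace _)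
            (((hξx x).pow 2).integrable_of_compactSpace _)
            ((hφ.mul (hξx x)).integrable_of_compactSpace _)
      _ = (∫ y, φ y ^ 2) * ∫ x, ξ x ^ 2 := by
          rw [integral_sub_left_eq_self (fun y => ξ y ^ 2)]
  have hconv : Continuous fun x => ∫ y, φ y * ξ (x - y) :=
    continuous_integral_of_continuous_uncurry
      ((hφ.comp continuous_snd).mul (hξ.comp (continuous_fst.sub continuous_snd)))
  calc ∫ x, (∫ y, φ y * ξ (x - y)) ^ 2
      ≤ ∫ _ : Torus d, (∫ y, φ y ^ 2) * ∫ x, ξ x ^ 2 :=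
        integral_mono ((hconv.pow 2).integrable_of_compactSpace _) (integrable_const _) hpointwise
    _ = (∫ x, ξ x ^ 2) * ∫ y, φ y ^ 2 := by simp [mul_comm]

section Coupling

variable {ξ : Torus d → ℝ} {Fb Fb' : Torus d → ℝ → ℝ}
  (m₁ m₂ : Measure (Torus d)) [IsFiniteMeasure m₁] [IsFiniteMeasure m₂]

theorem continuous_sub_comp_measConv (hξ : Continuous ξ)
    (hFb : Continuous fun p : Torus d × ℝ => Fb p.1 p.2) :
    Continuous fun y => Fb y (measConv m₁ ξ y) - Fb y (measConv m₂ ξ y) :=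
  (hFb.comp (continuous_id.prodMk (continuous_measConv m₁ hξ))).sub
    (hFb.comp (continuous_id.prodMk (continuous_measConv m₂ hξ)))

theorem mul_integral_sq_sub_measConv_le {c : ℝ} (hξ : Continuous ξ) (hξeven : ∀ x, ξ (-x) = ξ x)
    (hFb : Continuous fun p : Torus d × ℝ => Fb p.1 p.2)
    (hFb' : ∀ x z, HasDerivAt (fun w => Fb x w) (Fb' x z) z) (hlow : ∀ x z, c ≤ Fb' x z) :
    c * ∫ y, (measConv m₁ ξ y - measConv m₂ ξ y) ^ 2
      ≤ (∫ x, (coupling ξ Fb m₁ x - coupling ξ Fb m₂ x) ∂m₁)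
          - ∫ x, (coupling ξ Fb m₁ x - coupling ξ Fb m₂ x) ∂m₂ := by
  have hφ := continuous_sub_comp_measConv m₁ m₂ hξ hFb
  have hu := (continuous_measConv m₁ hξ).sub (continuous_measConv m₂ hξ)
  have hint : ∀ (m : Measure (Torus d)) [IsFiniteMeasure m], Integrable fun y =>
      (Fb y (measConv m₁ ξ y) - Fb y (measConv m₂ ξ y)) * measConv m ξ y := fun m _ =>
    (hφ.mul (continuous_measConv m hξ)).integrable_of_compactSpace _
  simp_rw [coupling_sub_coupling hξ hFb m₁ m₂]
  rw [integral_integral_mul_sub_eq hξ hξeven hφ, integral_integral_mul_sub_eq hξ hξeven hφ,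
    ← integral_sub (hint m₁) (hint m₂), ← integral_const_mul]
  refine integral_mono (((hu.pow 2).const_mul c).integrable_of_compactSpace _)
    ((hint m₁).sub (hint m₂)) fun y => ?_
  exact (mul_sq_sub_le_sub_mul_sub_of_le_deriv (hFb' y) (hlow y) _ _).trans_eq (mul_sub _ _ _)

theorem integral_sq_coupling_sub_le {C : ℝ} (hξ : Continuous ξ)
    (hFb : Continuous fun p : Torus d × ℝ => Fb p.1 p.2)
    (hFb' : ∀ x z, HasDerivAt (fun w => Fb x w) (Fb' x z) z) (hC : ∀ x z, |Fb' x z| ≤ C) :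
    ∫ x, (coupling ξ Fb m₁ x - coupling ξ Fb m₂ x) ^ 2
      ≤ (∫ x, ξ x ^ 2) * C ^ 2 * ∫ y, (measConv m₁ ξ y - measConv m₂ ξ y) ^ 2 := by
  have hφ := continuous_sub_comp_measConv m₁ m₂ hξ hFb
  have hu := (continuous_measConv m₁ hξ).sub (continuous_measConv m₂ hξ)
  simp_rw [coupling_sub_coupling hξ hFb m₁ m₂]
  refine (integral_sq_integral_mul_sub_le hξ hφ).trans ?_
  rw [mul_assoc, ← integral_const_mul (C ^ 2)]
  have hφ_sq : ∫ y, (Fb y (measConv m₁ ξ y) - Fb y (measConv m₂ ξ y)) ^ 2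
      ≤ ∫ y, C ^ 2 * (measConv m₁ ξ y - measConv m₂ ξ y) ^ 2 :=
    integral_mono ((hφ.pow 2).integrable_of_compactSpace _)
      (((hu.pow 2).const_mul _).integrable_of_compactSpace _)
      fun y => sq_sub_le_of_abs_deriv_le (hFb' y) (hC y) _ _
  exact mul_le_mul_of_nonneg_left hφ_sq (integral_nonneg fun x => sq_nonneg (ξ x))

end Coupling

end Torus

/-- the coupling `F` satisfies the weak coercivity condition, with
`c̄ = c³ ‖ξ‖_{L²}^{-2}`. -/
theorem statement2 {d : ℕ} (c : ℝ) (hc : 0 < c)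
    (ξ : Torus d → ℝ) (hξcont : Continuous ξ) (hξeven : ∀ x, ξ (-x) = ξ x)
    (Fb : Torus d → ℝ → ℝ) (Fb' : Torus d → ℝ → ℝ)
    (hFbcont : Continuous fun p : Torus d × ℝ => Fb p.1 p.2)
    (hFbderiv : ∀ x z, HasDerivAt (fun w => Fb x w) (Fb' x z) z)
    (hlow : ∀ x z, c ≤ Fb' x z) (hup : ∀ x z, Fb' x z ≤ 1 / c) :
    ∃ cbar : ℝ, 0 < cbar ∧
      ∀ m₁ m₂ : Measure (Torus d),
        IsProbabilityMeasure m₁ → IsProbabilityMeasure m₂ →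
        (∫ x, (coupling ξ Fb m₁ x - coupling ξ Fb m₂ x) ∂m₁)
            - ∫ x, (coupling ξ Fb m₁ x - coupling ξ Fb m₂ x) ∂m₂
          ≥ cbar * ∫ x, (coupling ξ Fb m₁ x - coupling ξ Fb m₂ x) ^ 2 := by
  set K := ∫ x, ξ x ^ 2
  -- `max K 1` rather than `K`, which vanishes when `ξ = 0`.
  refine ⟨c ^ 3 / max K 1, by positivity, fun m₁ m₂ _ _ => ?_⟩
  have hderiv_abs : ∀ x z, |Fb' x z| ≤ 1 / c := fun x z =>
    abs_le.2 ⟨by linarith [hlow x z, one_div_pos.2 hc], hup x z⟩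
  have hlower := mul_integral_sq_sub_measConv_le m₁ m₂ hξcont hξeven hFbcont hFbderiv hlow
  have hupper := integral_sq_coupling_sub_le m₁ m₂ hξcont hFbcont hFbderiv hderiv_abs
  set U := ∫ y, (measConv m₁ ξ y - measConv m₂ ξ y) ^ 2
  calc c ^ 3 / max K 1 * ∫ x, (coupling ξ Fb m₁ x - coupling ξ Fb m₂ x) ^ 2
      ≤ c ^ 3 / max K 1 * (K * (1 / c) ^ 2 * U) := by gcongr
    _ = c * U * (K / max K 1) := by field_simp
    _ ≤ c * U :=
      mul_le_of_le_one_right (by positivity) (div_le_one_of_le₀ (le_max_left _ _) (by positivity))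
    _ ≤ _ := hlower
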